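/- Let P be a Markov kernel on a measurable space (E, ℰ), let V : E → [1, ∞) be measurable, and let b ≥ 0, b' ≥ 0, λ > 0, 0 < δ < 1, d' ≥ 1 and 0 < β < 1. Define the taming function F : [1, ∞) → ℕ by F(z) = ⌈λz^δ⌉ for z > d' and F(z) = 1 for z ≤ d'. Assume: (i) the weak drift condition ∫ V(y) P(x, dy) ≤ V(x) + b for all x ∈ E; and (ii) the subsampled drift condition ∫ V(y) P^{F(V(x))}(x, dy) ≤ βV(x) + b'·1_{[V(x) ≤ d']} for all x ∈ E, where Pᵏ is the k-step transition kernel. Then for every β* with β < β* < 1 there exists a finite constant h* such that for all x ∈ E and all real z with V(x) ≤ z and z ≥ h*, one has ∫ V(y) P^{F(z)}(x, dy) ≤ β*z. -/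

import Mathlib

open MeasureTheory ProbabilityTheory
open scoped ENNReal NNReal

/-- The `k`-step transition kernel: the `k`-fold composition of `P` with itself. -/
noncomputable def iterKernel {E : Type*} [MeasurableSpace E] (P : Kernel E E) : ℕ → Kernel E E
  | 0 => Kernel.id
  | n + 1 => P ∘ₖ iterKernel P n

/-- The taming function `F(z) = ⌈λ z^δ⌉` for `z > d'` and `F(z) = 1` for `z ≤ d'`. -/
noncomputable def tamingF (lam δ d' : ℝ) (z : ℝ) : ℕ :=
  if z ≤ d' then 1 else ⌈lam * z ^ δ⌉₊

open Filter Asymptotics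

/-!
Since `F` is monotone, `F(V x) ≤ F(z)`, and by the weak drift (i) each of the `F(z) - F(V x)`
extra steps adds at most `b` to the integral of `V`. As `F ≥ 1`, there are fewer than
`F(z) < λ z^δ + 1` extra steps, so by (ii) the integral is at most `β z + b' + λ b z^δ`, which
is below `β* z` for large `z` because `z^δ = o(z)`.
-/

theorem isLittleO_rpow_id_atTop {δ : ℝ} (hδ : δ < 1) :
    (fun x : ℝ => x ^ δ) =o[atTop] id := by
  have hdecay : (fun x : ℝ => x ^ (δ - 1)) =o[atTop] fun _ => (1 : ℝ) :=
    (isLittleO_one_iff ℝ).2 (by simpa using tendsto_rpow_neg_atTop (y := 1 - δ) (by linarith))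
  refine (hdecay.mul_isBigO (isBigO_refl id atTop)).congr' ?_ (.of_forall fun x => by simp)
  filter_upwards [eventually_gt_atTop 0] with x hx
  rw [id, ← Real.rpow_add_one hx.ne', sub_add_cancel]

theorem eventually_mul_add_add_mul_rpow_le {β βs δ : ℝ} (hβ : β < βs) (hδ : δ < 1)
    (c c' : ℝ) :
    ∀ᶠ z in atTop, β * z + c + c' * z ^ δ ≤ βs * z := by
  have hsmall : (fun z : ℝ => c + c' * z ^ δ) =o[atTop] id :=
    (isLittleO_const_id_atTop c).add ((isLittleO_rpow_id_atTop hδ).const_mul_left c')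
  filter_upwards [hsmall.bound (sub_pos.2 hβ), eventually_ge_atTop 0] with z hz hz0
  rw [Real.norm_eq_abs, Real.norm_eq_abs, id, abs_of_nonneg hz0] at hz
  linarith [le_abs_self (c + c' * z ^ δ)]

section Kernel

variable {E : Type*} [MeasurableSpace E] {P : Kernel E E}

instance iterKernel.instIsMarkovKernel [IsMarkovKernel P] (n : ℕ) :
    IsMarkovKernel (iterKernel P n) := by
  induction n with
  | zero => rw [iterKernel]; infer_instance
  | succ n ih => rw [iterKernel]; infer_instance

variable [IsMarkovKernel P] {V : E → ℝ≥0∞} {c : ℝ≥0∞}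

theorem lintegral_iterKernel_succ_le (hV : Measurable V)
    (hdrift : ∀ x, ∫⁻ y, V y ∂(P x) ≤ V x + c) (n : ℕ) (x : E) :
    ∫⁻ y, V y ∂(iterKernel P (n + 1) x) ≤ ∫⁻ y, V y ∂(iterKernel P n x) + c :=
  calc ∫⁻ y, V y ∂(iterKernel P (n + 1) x)
      = ∫⁻ y, ∫⁻ w, V w ∂(P y) ∂(iterKernel P n x) := Kernel.lintegral_comp _ _ _ hV
    _ ≤ ∫⁻ y, (V y + c) ∂(iterKernel P n x) := lintegral_mono hdrift
    _ = ∫⁻ y, V y ∂(iterKernel P n x) + c := by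
      rw [lintegral_add_right _ measurable_const, lintegral_const, measure_univ, mul_one]

theorem lintegral_iterKernel_le_add_sub_mul (hV : Measurable V)
    (hdrift : ∀ x, ∫⁻ y, V y ∂(P x) ≤ V x + c) {m n : ℕ} (hmn : m ≤ n) (x : E) :
    ∫⁻ y, V y ∂(iterKernel P n x)
      ≤ ∫⁻ y, V y ∂(iterKernel P m x) + (n - m : ℕ) * c := by
  induction n, hmn using Nat.le_induction with
  | base => simp
  | succ n hmn ih =>
    calc ∫⁻ y, V y ∂(iterKernel P (n + 1) x)
        ≤ ∫⁻ y, V y ∂(iterKernel P n x) + c := lintegral_iterKernel_succ_le hV hdrift n x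
      _ ≤ ∫⁻ y, V y ∂(iterKernel P m x) + (n - m : ℕ) * c + c := by gcongr
      _ = ∫⁻ y, V y ∂(iterKernel P m x) + (n + 1 - m : ℕ) * c := by
        rw [Nat.sub_add_comm hmn]; push_cast; ring

end Kernel

section Taming

variable {lam δ d' : ℝ}

theorem tamingF_of_lt {z : ℝ} (hz : d' < z) : tamingF lam δ d' z = ⌈lam * z ^ δ⌉₊ := by
  rw [tamingF, if_neg hz.not_ge]

theorem one_le_tamingF (hlam : 0 < lam) (hd' : 0 ≤ d') (z : ℝ) : 1 ≤ tamingF lam δ d' z := by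
  by_cases hz : z ≤ d'
  · rw [tamingF, if_pos hz]
  · rw [tamingF_of_lt (not_le.1 hz), Nat.one_le_ceil_iff]
    have : 0 < z := by linarith
    positivity

theorem tamingF_mono (hlam : 0 < lam) (hδ : 0 ≤ δ) (hd' : 0 ≤ d') :
    Monotone (tamingF lam δ d') := by
  intro a z haz
  by_cases ha : a ≤ d'
  · rw [tamingF, if_pos ha]
    exact one_le_tamingF hlam hd' z
  · have ha : d' < a := not_le.1 ha
    rw [tamingF_of_lt ha, tamingF_of_lt (ha.trans_le haz)]
    gcongr
    linarith

theorem tamingF_sub_tamingF_le (hlam : 0 < lam) (hd' : 0 ≤ d') (a : ℝ) {z : ℝ} (hz : d' < z) :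
    ((tamingF lam δ d' z - tamingF lam δ d' a : ℕ) : ℝ) ≤ lam * z ^ δ := by
  have hpos : 0 ≤ lam * z ^ δ := by
    have : 0 < z := by linarith
    positivity
  have hceil : (tamingF lam δ d' z : ℝ) < lam * z ^ δ + 1 := by
    rw [tamingF_of_lt hz]
    exact Nat.ceil_lt_add_one hpos
  have hsub : tamingF lam δ d' z - tamingF lam δ d' a + 1 ≤ tamingF lam δ d' z := by
    have ha := one_le_tamingF (δ := δ) hlam hd' a
    have hz := one_le_tamingF (δ := δ) hlam hd' z
    omega
  have : ((tamingF lam δ d' z - tamingF lam δ d' a : ℕ) : ℝ) + 1 ≤ tamingF lam δ d' z := by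
    exact_mod_cast hsub
  linarith

end Taming

theorem tamed_chain_dominating_bound_general
    {E : Type*} [MeasurableSpace E] (P : Kernel E E) [IsMarkovKernel P]
    (V : E → ℝ≥0∞) (hV : Measurable V)
    (hVfin : ∀ x, V x ≠ ∞)
    (b b' lam δ d' β : ℝ)
    (hb : 0 ≤ b) (hb' : 0 ≤ b') (hlam : 0 < lam)
    (hδ0 : 0 < δ) (hδ1 : δ < 1) (hd' : 1 ≤ d') (hβ0 : 0 < β)
    -- (i) weak drift condition for the one-step kernel
    (hweak : ∀ x : E, ∫⁻ y, V y ∂(P x) ≤ V x + ENNReal.ofReal b)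
    -- (ii) geometric drift condition for the chain subsampled at the taming times
    (hsub : ∀ x : E,
      ∫⁻ y, V y ∂(iterKernel P (tamingF lam δ d' ((V x).toReal)) x)
        ≤ ENNReal.ofReal β * V x
          + (if (V x).toReal ≤ d' then ENNReal.ofReal b' else 0)) :
    ∀ βs : ℝ, β < βs → βs < 1 →
      ∃ hstar : ℝ, ∀ (x : E) (z : ℝ), (V x).toReal ≤ z → hstar ≤ z →
        ∫⁻ y, V y ∂(iterKernel P (tamingF lam δ d' z) x) ≤ ENNReal.ofReal (βs * z) := by
  intro βs hβs _
  obtain ⟨hstar, hhstar⟩ := eventually_atTop.1 <|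
    (eventually_mul_add_add_mul_rpow_le hβs hδ1 b' (lam * b)).and (eventually_gt_atTop d')
  refine ⟨hstar, fun x z hVz hz => ?_⟩
  obtain ⟨hreal, hdz⟩ := hhstar z hz
  have hd'0 : 0 ≤ d' := by linarith
  have hz0 : 0 ≤ z := by linarith
  set F := tamingF lam δ d'
  have hgap := tamingF_sub_tamingF_le (δ := δ) hlam hd'0 (V x).toReal hdz
  have hVx : V x ≤ ENNReal.ofReal z := by
    rw [← ENNReal.ofReal_toReal (hVfin x)]
    exact ENNReal.ofReal_le_ofReal hVz
  calc ∫⁻ y, V y ∂(iterKernel P (F z) x)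
      ≤ ∫⁻ y, V y ∂(iterKernel P (F (V x).toReal) x)
          + (F z - F (V x).toReal : ℕ) * ENNReal.ofReal b :=
        lintegral_iterKernel_le_add_sub_mul hV hweak (tamingF_mono hlam hδ0.le hd'0 hVz) x
    _ ≤ ENNReal.ofReal β * ENNReal.ofReal z + ENNReal.ofReal b'
          + ENNReal.ofReal (lam * z ^ δ) * ENNReal.ofReal b := by
        gcongr
        · refine (hsub x).trans ?_
          gcongr
          split_ifs <;> simp
        · rw [← ENNReal.ofReal_natCast]
          exact ENNReal.ofReal_le_ofReal hgap
    _ = ENNReal.ofReal (β * z + b' + lam * b * z ^ δ) := by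
        rw [ENNReal.ofReal_add (by positivity) (by positivity),
          ENNReal.ofReal_add (by positivity) hb',
          ← ENNReal.ofReal_mul hβ0.le, ← ENNReal.ofReal_mul (by positivity), mul_right_comm]
    _ ≤ ENNReal.ofReal (βs * z) := ENNReal.ofReal_le_ofReal hreal

/-- key inequality (2) in the corrected proof of Theorem 16.
Under the weak drift condition (i) and the subsampled geometric drift condition (ii)
for the taming function `F`, for every `β* ∈ (β, 1)` there is a finite constant `h*`
such that `∫ V dP^{F(z)}(x,·) ≤ β* z` whenever `V x ≤ z` and `z ≥ h*`. -/
theorem tamed_chain_dominating_bound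
    {E : Type*} [MeasurableSpace E] (P : Kernel E E) [IsMarkovKernel P]
    (V : E → ℝ≥0∞) (hV : Measurable V)
    (hV1 : ∀ x, 1 ≤ V x) (hVfin : ∀ x, V x ≠ ∞)
    (b b' lam δ d' β : ℝ)
    (hb : 0 ≤ b) (hb' : 0 ≤ b') (hlam : 0 < lam)
    (hδ0 : 0 < δ) (hδ1 : δ < 1) (hd' : 1 ≤ d') (hβ0 : 0 < β) (hβ1 : β < 1)
    -- (i) weak drift condition for the one-step kernel
    (hweak : ∀ x : E, ∫⁻ y, V y ∂(P x) ≤ V x + ENNReal.ofReal b)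
    -- (ii) geometric drift condition for the chain subsampled at the taming times
    (hsub : ∀ x : E,
      ∫⁻ y, V y ∂(iterKernel P (tamingF lam δ d' ((V x).toReal)) x)
        ≤ ENNReal.ofReal β * V x
          + (if (V x).toReal ≤ d' then ENNReal.ofReal b' else 0)) :
    ∀ βs : ℝ, β < βs → βs < 1 →
      ∃ hstar : ℝ, ∀ (x : E) (z : ℝ), (V x).toReal ≤ z → hstar ≤ z →
        ∫⁻ y, V y ∂(iterKernel P (tamingF lam δ d' z) x) ≤ ENNReal.ofReal (βs * z) :=
  tamed_chain_dominating_bound_general P V hV hVfin b b' lam δ d' β hb hb' hlam hδ0 hδ1 hd' hβ0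
    hweak hsub
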